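/- Let D₀ = ∫_{-1}^{1} exp(-x²/2) dx + 2·exp(-1/2), and let γ = gaussianReal 0 1 be the standard Gaussian measure on ℝ. Then for every probability measure μ on ℝ that is absolutely continuous with respect to Lebesgue measure with a density p satisfying p(x) = D₀⁻¹·exp(-x²/2) for all x ∈ (-1,1), the Kullback–Leibler divergence satisfies KL(μ | γ) > 0.019. -/

import Mathlib

/-!
Let `I = ∫_{-1}^{1} exp(-x²/2) dx`. Coarse-graining to the partition `{(-1, 1), (-1, 1)ᶜ}` can
only decrease the Kullback–Leibler divergence, so `KL(μ | γ)` is at least the divergence between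
the Bernoulli laws of parameters `μ(-1, 1) = I / D₀ ≈ 0.5852` and `γ(-1, 1) = I / √(2π) ≈ 0.6827`,
which is about `0.0196`. Certifying `> 0.019` needs `I`, `exp(-1/2)` and `√(2π)` to four digits.
-/

open MeasureTheory ProbabilityTheory

/-- The normalization constant `D₀ = ∫_{-1}^{1} exp(-x²/2) dx + 2 exp(-1/2)`. -/
noncomputable def D₀ : ℝ := (∫ x in (-1 : ℝ)..1, Real.exp (-x ^ 2 / 2)) + 2 * Real.exp (-1 / 2)

/-- The Kullback–Leibler divergence `KL(μ | ν) = ∫ log(dμ/dν) dμ` when `μ ≪ ν` and the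
log-likelihood ratio is integrable, and `+∞` otherwise. -/
noncomputable def klDiv (μ ν : Measure ℝ) : EReal :=
  @ite _ (μ ≪ ν ∧ Integrable (llr μ ν) μ) (Classical.propDecidable _)
    ((∫ x, llr μ ν x ∂μ : ℝ) : EReal) ⊤

open Real Set

section LogLikelihoodRatio

variable {α : Type*} [MeasurableSpace α] {μ ν : Measure α} {s : Set α}

lemma mul_log_div_le_setIntegral_llr [IsFiniteMeasure μ] [IsFiniteMeasure ν] (hμν : μ ≪ ν)
    (hint : Integrable (llr μ ν) μ) (hs : MeasurableSet s) :
    μ.real s * log (μ.real s / ν.real s) ≤ ∫ x in s, llr μ ν x ∂μ := by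
  rcases eq_or_ne (ν s) 0 with hνs | hνs
  · have hμs : μ s = 0 := hμν hνs
    simp [Measure.real, hμs, Measure.restrict_eq_zero.mpr hμs]
  have hν_pos : 0 < ν.real s := ENNReal.toReal_pos hνs (measure_ne_top ν s)
  have hint' : IntegrableOn (fun x ↦ (μ.rnDeriv ν x).toReal * log (μ.rnDeriv ν x).toReal) s ν :=
    ((integrable_rnDeriv_smul_iff hμν).mpr hint).integrableOn
  have hJensen := convexOn_mul_log.map_set_average_le continuous_mul_log.continuousOn isClosed_Ici
    hνs (measure_ne_top ν s) (ae_of_all _ fun _ ↦ ENNReal.toReal_nonneg)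
    Measure.integrable_toReal_rnDeriv.integrableOn hint'
  rw [setAverage_eq, setAverage_eq, Measure.setIntegral_toReal_rnDeriv hμν,
    setIntegral_toReal_rnDeriv_mul hμν hs, smul_eq_mul, smul_eq_mul, inv_mul_eq_div,
    inv_mul_eq_div] at hJensen
  calc μ.real s * log (μ.real s / ν.real s)
      = ν.real s * (μ.real s / ν.real s * log (μ.real s / ν.real s)) := by field_simp
    _ ≤ ν.real s * ((∫ x in s, llr μ ν x ∂μ) / ν.real s) := by gcongr; exact hJensen
    _ = ∫ x in s, llr μ ν x ∂μ := by field_simp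

noncomputable def binaryKL (a b : ℝ) : ℝ := a * log (a / b) + (1 - a) * log ((1 - a) / (1 - b))

lemma binaryKL_le_integral_llr [IsProbabilityMeasure μ] [IsProbabilityMeasure ν] (hμν : μ ≪ ν)
    (hint : Integrable (llr μ ν) μ) (hs : MeasurableSet s) :
    binaryKL (μ.real s) (ν.real s) ≤ ∫ x, llr μ ν x ∂μ := by
  rw [← integral_add_compl hs hint, binaryKL, ← probReal_compl_eq_one_sub hs,
    ← probReal_compl_eq_one_sub hs]
  exact add_le_add (mul_log_div_le_setIntegral_llr hμν hint hs)
    (mul_log_div_le_setIntegral_llr hμν hint hs.compl)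

lemma measureReal_withDensity_eq_setIntegral {p : α → ENNReal} {f : α → ℝ}
    (hs : MeasurableSet s) (hf : IntegrableOn f s ν) (hf₀ : ∀ x ∈ s, 0 ≤ f x)
    (hp : ∀ x ∈ s, p x = ENNReal.ofReal (f x)) :
    (ν.withDensity p).real s = ∫ x in s, f x ∂ν := by
  rw [Measure.real, withDensity_apply _ hs, setLIntegral_congr_fun hs hp,
    ← ofReal_integral_eq_lintegral_ofReal hf ((ae_restrict_iff' hs).mpr (ae_of_all _ hf₀)),
    ENNReal.toReal_ofReal (setIntegral_nonneg hs hf₀)]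

end LogLikelihoodRatio

lemma le_binaryKL_of_exp_mul_le {a b u v : ℝ} (hb : 0 < b) (hb1 : b < 1)
    (hu : exp u * b ≤ a) (hv : exp v * (1 - b) ≤ 1 - a) :
    a * u + (1 - a) * v ≤ binaryKL a b := by
  have hb1' : 0 < 1 - b := by linarith
  have ha : 0 < a := lt_of_lt_of_le (by positivity) hu
  have ha1 : 0 < 1 - a := lt_of_lt_of_le (by positivity) hv
  have hlog₁ : u ≤ log (a / b) := by
    rwa [le_log_iff_exp_le (by positivity), le_div_iff₀ hb]
  have hlog₂ : v ≤ log ((1 - a) / (1 - b)) := by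
    rwa [le_log_iff_exp_le (by positivity), le_div_iff₀ hb1']
  unfold binaryKL
  gcongr

lemma gaussianReal_real_eq_setIntegral {s : Set ℝ} (hs : MeasurableSet s) :
    (gaussianReal 0 1).real s = (√(2 * π))⁻¹ * ∫ x in s, exp (-x ^ 2 / 2) := by
  rw [Measure.real, gaussianReal_apply_eq_integral 0 one_ne_zero, ENNReal.toReal_ofReal
    (setIntegral_nonneg hs fun x _ ↦ gaussianPDFReal_nonneg 0 1 x), ← integral_const_mul]
  simp [gaussianPDFReal]

/-- `x ^ 10 / 3200` is the remainder `|y|⁵ · 6 / (5! · 5)` of `Real.exp_bound` at `y = -x²/2`. -/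
lemma abs_exp_neg_sq_div_two_sub_le {x : ℝ} (hx : |x| ≤ 1) :
    |exp (-x ^ 2 / 2) - (1 - x ^ 2 / 2 + x ^ 4 / 8 - x ^ 6 / 48 + x ^ 8 / 384)| ≤
      x ^ 10 / 3200 := by
  have hx2 : x ^ 2 ≤ 1 := by nlinarith [abs_nonneg x, sq_abs x]
  have hy : |-x ^ 2 / 2| = x ^ 2 / 2 := by rw [abs_div, abs_neg, abs_sq, abs_two]
  have h := exp_bound (x := -x ^ 2 / 2) (by rw [hy]; linarith) (n := 5) (by norm_num)
  rw [hy] at h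
  convert h using 2
  · simp only [Finset.sum_range_succ, Finset.sum_range_zero, Nat.factorial]; push_cast; ring
  · norm_num [Nat.factorial]; ring

lemma integral_exp_neg_sq_div_two_mem_Icc :
    ∫ x in (-1 : ℝ)..1, exp (-x ^ 2 / 2) ∈ Icc 1.7112 1.7114 := by
  have hcont : Continuous fun x : ℝ ↦ exp (-x ^ 2 / 2) := by fun_prop
  have hbound (x : ℝ) (hx : x ∈ Icc (-1 : ℝ) 1) :=
    abs_le.mp (abs_exp_neg_sq_div_two_sub_le (abs_le.mpr hx))
  have hlow : ∫ x in (-1 : ℝ)..1, (1 - x ^ 2 / 2 + x ^ 4 / 8 - x ^ 6 / 48 + x ^ 8 / 384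
      - x ^ 10 / 3200) ≤ ∫ x in (-1 : ℝ)..1, exp (-x ^ 2 / 2) :=
    intervalIntegral.integral_mono_on (by norm_num)
      (Continuous.intervalIntegrable (by fun_prop) _ _) (hcont.intervalIntegrable _ _)
      fun x hx ↦ by linarith [hbound x hx]
  have hup : ∫ x in (-1 : ℝ)..1, exp (-x ^ 2 / 2) ≤ ∫ x in (-1 : ℝ)..1, (1 - x ^ 2 / 2 + x ^ 4 / 8
      - x ^ 6 / 48 + x ^ 8 / 384 + x ^ 10 / 3200) :=
    intervalIntegral.integral_mono_on (by norm_num) (hcont.intervalIntegrable _ _)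
      (Continuous.intervalIntegrable (by fun_prop) _ _) fun x hx ↦ by linarith [hbound x hx]
  simp (disch := exact Continuous.intervalIntegrable (by fun_prop) _ _) only
    [intervalIntegral.integral_sub, intervalIntegral.integral_add] at hlow hup
  norm_num [integral_pow, intervalIntegral.integral_div] at hlow hup
  constructor <;> linarith

lemma exp_neg_one_half_mem_Icc : exp (-1 / 2) ∈ Icc 0.6065 0.6066 := by
  have hsq : exp (-1 / 2) ^ 2 * exp 1 = 1 := by rw [← exp_nat_mul, ← exp_add]; norm_num
  have := exp_pos (-1 / 2)
  constructor <;> nlinarith [exp_one_gt_d9, exp_one_lt_d9]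

lemma sqrt_two_mul_pi_mem_Icc : √(2 * π) ∈ Icc 2.5066 2.5067 := by
  have hsq : √(2 * π) ^ 2 = 2 * π := sq_sqrt (by positivity)
  have := sqrt_nonneg (2 * π)
  constructor <;> nlinarith [pi_gt_d6, pi_lt_d6]

lemma lt_binaryKL_of_mem_Icc {I E S : ℝ} (hI : I ∈ Icc 1.7112 1.7114)
    (hE : E ∈ Icc 0.6065 0.6066) (hS : S ∈ Icc 2.5066 2.5067) :
    0.019 < binaryKL (I / (I + 2 * E)) (I / S) := by
  obtain ⟨hI₀, hI₁⟩ := hI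
  obtain ⟨hE₀, hE₁⟩ := hE
  obtain ⟨hS₀, hS₁⟩ := hS
  have hD : 0 < I + 2 * E := by linarith
  have hS_pos : 0 < S := by linarith
  have hb : 0 < I / S := div_pos (by linarith) hS_pos
  have hb₁ : 1 - I / S = (S - I) / S := by field_simp
  have ha₁ : 1 - I / (I + 2 * E) = 2 * E / (I + 2 * E) := by field_simp; ring
  have ha : I / (I + 2 * E) ≤ 0.5853 := by rw [div_le_iff₀ hD]; linarith
  have hexp_neg : exp (-0.155) ≤ 0.8566 := by
    have h := sum_le_exp_of_nonneg (x := 0.155) (by norm_num) 4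
    norm_num [Finset.sum_range_succ, Nat.factorial] at h
    rw [exp_neg, inv_le_comm₀ (exp_pos _) (by norm_num)]
    linarith
  have hexp_pos : exp 0.266 ≤ 1.305 := by
    have h := exp_bound' (x := 0.266) (by norm_num) (by norm_num) (n := 4) (by norm_num)
    norm_num [Finset.sum_range_succ, Nat.factorial] at h
    linarith
  -- the two logarithms in `binaryKL` are `≈ -0.1541` and `≈ 0.2680`
  refine lt_of_lt_of_le ?_ (le_binaryKL_of_exp_mul_le (u := -0.155) (v := 0.266) hb
    ((div_lt_one hS_pos).mpr (by linarith)) ?_ ?_)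
  · linarith
  · calc exp (-0.155) * (I / S) ≤ 0.8566 * (I / S) := by gcongr
      _ ≤ I / (I + 2 * E) := by
        rw [mul_div_assoc', div_le_div_iff₀ hS_pos hD]; nlinarith
  · calc exp 0.266 * (1 - I / S) ≤ 1.305 * (1 - I / S) := by
          gcongr; rw [sub_nonneg, div_le_one hS_pos]; linarith
      _ ≤ 1 - I / (I + 2 * E) := by
        rw [hb₁, ha₁, mul_div_assoc', div_le_div_iff₀ hS_pos hD]; nlinarith [mul_le_mul hE₀ hS₀]

/-- Every probability measure `μ` on `ℝ` with a Lebesgue density equal to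
`D₀⁻¹ exp(-x²/2)` on `(-1, 1)` satisfies `KL(μ | γ) > 0.019`, where `γ` is the standard
Gaussian. Hence the forward-Euler iterates of the second counter-example stay bounded
away from the minimum of the energy. -/
theorem klDiv_lower_bound_of_density_on_interval
    (μ : Measure ℝ) [IsProbabilityMeasure μ] (p : ℝ → ENNReal)
    (hμ : μ = volume.withDensity p)
    (hp : ∀ x ∈ Set.Ioo (-1 : ℝ) 1, p x = ENNReal.ofReal (D₀⁻¹ * Real.exp (-x ^ 2 / 2))) :
    ((0.019 : ℝ) : EReal) < klDiv μ (gaussianReal 0 1) := by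
  by_cases hc : μ ≪ gaussianReal 0 1 ∧ Integrable (llr μ (gaussianReal 0 1)) μ
  swap
  · rw [klDiv, if_neg hc]; exact EReal.coe_lt_top _
  rw [klDiv, if_pos hc, EReal.coe_lt_coe_iff]
  have hI := integral_exp_neg_sq_div_two_mem_Icc
  have hE := exp_neg_one_half_mem_Icc
  have hD₀ : 0 < D₀ := by rw [D₀]; linarith [hI.1, hE.1]
  have hI_Ioo :
      ∫ x in Ioo (-1 : ℝ) 1, exp (-x ^ 2 / 2) = ∫ x in (-1 : ℝ)..1, exp (-x ^ 2 / 2) := by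
    rw [intervalIntegral.integral_of_le (by norm_num), integral_Ioc_eq_integral_Ioo]
  set I := ∫ x in (-1 : ℝ)..1, exp (-x ^ 2 / 2)
  have hμA : μ.real (Ioo (-1) 1) = I / D₀ := by
    rw [hμ, measureReal_withDensity_eq_setIntegral measurableSet_Ioo
      ((by fun_prop : Continuous _).integrableOn_Icc.mono_set Ioo_subset_Icc_self)
      (fun x _ ↦ by positivity) hp,
      integral_const_mul, hI_Ioo, inv_mul_eq_div]
  have hγA : (gaussianReal 0 1).real (Ioo (-1) 1) = I / √(2 * π) := by
    rw [gaussianReal_real_eq_setIntegral measurableSet_Ioo, hI_Ioo, inv_mul_eq_div]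
  have hKL := binaryKL_le_integral_llr (s := Ioo (-1) 1) hc.1 hc.2 measurableSet_Ioo
  rw [hμA, hγA] at hKL
  exact (lt_binaryKL_of_mem_Icc hI hE sqrt_two_mul_pi_mem_Icc).trans_le hKL
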